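/- Fix reals a > 0 > u, and for β > 0 define G_{a,β}(u) := log((1+e^{βu})/(1+e^{βa})) + e^{βa}·log((1+e^{−βu})/(1+e^{−βa})). Then lim_{β→∞} G_{a,β}(u)/(β·e^{βa}) = −u; in particular G_{a,β}(u) grows exponentially fast in β. -/

import Mathlib

open scoped BigOperators Topology Classical
open Real MeasureTheory Filter

/-- The function `G_a(u) = log((1+e^{βu})/(1+e^{βa})) + e^{βa}·log((1+e^{-βu})/(1+e^{-βa}))`. -/
noncomputable def Gfun (β a u : ℝ) : ℝ :=
  Real.log ((1 + Real.exp (β * u)) / (1 + Real.exp (β * a)))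
    + Real.exp (β * a) * Real.log ((1 + Real.exp (-(β * u))) / (1 + Real.exp (-(β * a))))

/-!
Write `L x = log (1 + e^x)`, so that `L x = x + L (-x)` and `L x → 0` as `x → -∞`.
Using this identity on `L (βa)` and `L (-βu)` gives
`G = -βu e^{βa} + (1 + e^{βa}) (L (βu) - L (-βa)) - βa`, and after division by `β e^{βa}`
everything but `-u` tends to `0`.
-/

lemma log_one_add_exp_eq_add_log_one_add_exp_neg (x : ℝ) :
    log (1 + exp x) = x + log (1 + exp (-x)) := by
  have h : 1 + exp x = exp x * (1 + exp (-x)) := by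
    rw [mul_add, mul_one, ← exp_add, add_neg_cancel, exp_zero, add_comm]
  rw [h, log_mul (exp_pos x).ne' (by positivity), log_exp]

lemma tendsto_log_one_add_exp_atBot :
    Tendsto (fun x : ℝ => log (1 + exp x)) atBot (𝓝 0) := by
  have h : Tendsto (fun x : ℝ => 1 + exp x) atBot (𝓝 1) := by
    simpa using tendsto_exp_atBot.const_add 1
  simpa [Function.comp_def] using (continuousAt_log one_ne_zero).tendsto.comp h

lemma Gfun_eq (β a u : ℝ) :
    Gfun β a u = -(β * u) * exp (β * a)
      + ((1 + exp (β * a)) * (log (1 + exp (β * u)) - log (1 + exp (-(β * a)))) - β * a) := by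
  rw [Gfun, log_div (by positivity) (by positivity), log_div (by positivity) (by positivity),
    log_one_add_exp_eq_add_log_one_add_exp_neg (β * a),
    log_one_add_exp_eq_add_log_one_add_exp_neg (-(β * u)), neg_neg]
  ring

/-- For fixed `a > 0 > u`, `G_{a,β}(u)/(β e^{βa}) → -u` as `β → ∞`. -/
theorem stmt_11 (a u : ℝ) (ha : 0 < a) (hu : u < 0) :
    Filter.Tendsto (fun β : ℝ => Gfun β a u / (β * Real.exp (β * a)))
      Filter.atTop (𝓝 (-u)) := by
  have hE : Tendsto (fun β : ℝ => (exp (β * a))⁻¹) atTop (𝓝 0) :=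
    (tendsto_exp_atTop.comp (tendsto_id.atTop_mul_const ha)).inv_tendsto_atTop
  have hL : Tendsto (fun β : ℝ => log (1 + exp (β * u)) - log (1 + exp (-(β * a))))
      atTop (𝓝 0) := by
    simpa [Function.comp_def] using
      (tendsto_log_one_add_exp_atBot.comp (tendsto_id.atTop_mul_const_of_neg hu)).sub
        (tendsto_log_one_add_exp_atBot.comp (tendsto_id.atTop_mul_const_of_neg (neg_lt_zero.2 ha)))
  have hrem : Tendsto (fun β : ℝ => -u + ((1 + (exp (β * a))⁻¹)
      * ((log (1 + exp (β * u)) - log (1 + exp (-(β * a)))) * β⁻¹) - a * (exp (β * a))⁻¹))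
      atTop (𝓝 (-u)) := by
    simpa using tendsto_const_nhds.add (((tendsto_const_nhds.add hE).mul
      (hL.mul tendsto_inv_atTop_zero)).sub (tendsto_const_nhds.mul hE))
  refine hrem.congr' ?_
  filter_upwards [eventually_gt_atTop 0] with β hβ
  rw [Gfun_eq]
  field_simp
  ring
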